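/- arXiv:1106.2218 — 2 statements merged into one kernel-verified Lean document; each statement's English description precedes it below -/
import Mathlib

section
/- A reflection L on a triangulated category T is semiexact (the class of L-local objects is semicolocalizing) if and only if L preserves every distinguished triangle X → Y → Z → ΣX in which Z is L-local, i.e., applying L and the unit yields a distinguished triangle LX → LY → LZ → ΣLX. -/
open CategoryTheory Category Limits Pretriangulated

universe v u

namespace Paper

section General

variable {T : Type u} [Category.{v} T]

/-- A full subcategory (given by its class of objects) is closed under retracts. -/
def ClosedUnderRetracts (S : Set T) : Prop :=
  ∀ ⦃A B : T⦄, A ∈ S → (∃ (i : B ⟶ A) (r : A ⟶ B), i ≫ r = 𝟙 B) → B ∈ S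

/-- A full subcategory is weakly reflective: every object admits a weak reflection into it. -/
def WeaklyReflective (S : Set T) : Prop :=
  ∀ X : T, ∃ (X' : T) (l : X ⟶ X'), X' ∈ S ∧
    ∀ ⦃Y : T⦄, Y ∈ S → ∀ f : X ⟶ Y, ∃ g : X' ⟶ Y, l ≫ g = f

/-- A full subcategory is weakly coreflective. -/
def WeaklyCoreflective (S : Set T) : Prop :=
  ∀ X : T, ∃ (X' : T) (c : X' ⟶ X), X' ∈ S ∧
    ∀ ⦃Y : T⦄, Y ∈ S → ∀ f : Y ⟶ X, ∃ g : Y ⟶ X', g ≫ c = f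

/-- A full subcategory is reflective: the inclusion has a left adjoint. -/
def ReflectiveSet (S : Set T) : Prop :=
  (ObjectProperty.ι (fun X => X ∈ S)).IsRightAdjoint

/-- A full subcategory is coreflective: the inclusion has a right adjoint. -/
def CoreflectiveSet (S : Set T) : Prop :=
  (ObjectProperty.ι (fun X => X ∈ S)).IsLeftAdjoint

end General

/-- The data of an endofunctor together with a natural transformation from the identity
(a candidate reflection with its unit). -/
structure ReflectionData (T : Type u) [Category.{v} T] where
  L : T ⥤ T
  unit : 𝟭 T ⟶ L

/-- The data of an endofunctor together with a natural transformation to the identity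
(a candidate coreflection with its counit). -/
structure CoreflectionData (T : Type u) [Category.{v} T] where
  C : T ⥤ T
  counit : C ⟶ 𝟭 T

section ReflData

variable {T : Type u} [Category.{v} T]

/-- The `L`-local objects: the essential image of `L`. -/
def ReflectionData.localObjects (R : ReflectionData T) : Set T := R.L.essImage

/-- `(L, l)` is a reflection: every morphism to an `L`-local object factors uniquely
through the unit. -/
def ReflectionData.IsReflection (R : ReflectionData T) : Prop :=
  ∀ ⦃X W : T⦄, W ∈ R.localObjects → ∀ f : X ⟶ W,
    ∃! g : R.L.obj X ⟶ W, R.unit.app X ≫ g = f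

/-- The `C`-colocal objects: the essential image of `C`. -/
def CoreflectionData.colocalObjects (Q : CoreflectionData T) : Set T := Q.C.essImage

/-- `(C, c)` is a coreflection: every morphism from a `C`-colocal object factors uniquely
through the counit. -/
def CoreflectionData.IsCoreflection (Q : CoreflectionData T) : Prop :=
  ∀ ⦃X W : T⦄, W ∈ Q.colocalObjects → ∀ f : W ⟶ X,
    ∃! g : W ⟶ Q.C.obj X, g ≫ Q.counit.app X = f

end ReflData

section Triangulated

variable {T : Type u} [Category.{v} T] [HasZeroObject T] [Preadditive T] [HasShift T ℤ]
  [∀ n : ℤ, (shiftFunctor T n).Additive] [Pretriangulated T]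

/-- Closed under fibres: the first vertex of a distinguished triangle whose second and third
vertices lie in `S` lies in `S`. -/
def ClosedUnderFibres (S : Set T) : Prop :=
  ∀ ⦃X Y Z : T⦄ (u : X ⟶ Y) (v : Y ⟶ Z) (w : Z ⟶ X⟦(1:ℤ)⟧),
    (Triangle.mk u v w ∈ distTriang T) → Y ∈ S → Z ∈ S → X ∈ S

/-- Closed under cofibres. -/
def ClosedUnderCofibres (S : Set T) : Prop :=
  ∀ ⦃X Y Z : T⦄ (u : X ⟶ Y) (v : Y ⟶ Z) (w : Z ⟶ X⟦(1:ℤ)⟧),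
    (Triangle.mk u v w ∈ distTriang T) → X ∈ S → Y ∈ S → Z ∈ S

/-- Closed under extensions. -/
def ClosedUnderExtensions (S : Set T) : Prop :=
  ∀ ⦃X Y Z : T⦄ (u : X ⟶ Y) (v : Y ⟶ Z) (w : Z ⟶ X⟦(1:ℤ)⟧),
    (Triangle.mk u v w ∈ distTriang T) → X ∈ S → Z ∈ S → Y ∈ S

/-- `^⊥D`: objects `X` with `T(X, ΣᵏD) = 0` for all `D ∈ D` and all integers `k`. -/
def leftOrth (D : Set T) : Set T :=
  {X | ∀ ⦃E : T⦄, E ∈ D → ∀ k : ℤ, ∀ f : X ⟶ E⟦k⟧, f = 0}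

/-- `D^⊥`: objects `Y` with `T(ΣᵏD, Y) = 0` for all `D ∈ D` and all integers `k`. -/
def rightOrth (D : Set T) : Set T :=
  {Y | ∀ ⦃E : T⦄, E ∈ D → ∀ k : ℤ, ∀ f : E⟦k⟧ ⟶ Y, f = 0}

/-- `⊾D`: objects `X` with `T(X, ΣᵏD) = 0` for all `D ∈ D` and all `k ≤ 0`. -/
def leftSemiOrth (D : Set T) : Set T :=
  {X | ∀ ⦃E : T⦄, E ∈ D → ∀ k : ℤ, k ≤ 0 → ∀ f : X ⟶ E⟦k⟧, f = 0}

/-- `D⊿`: objects `Y` with `T(ΣᵏD, Y) = 0` for all `D ∈ D` and all `k ≥ 0`. -/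
def rightSemiOrth (D : Set T) : Set T :=
  {Y | ∀ ⦃E : T⦄, E ∈ D → ∀ k : ℤ, 0 ≤ k → ∀ f : E⟦k⟧ ⟶ Y, f = 0}

section WithLimits

variable [HasProducts.{v} T] [HasCoproducts.{v} T]

/-- Closed under all (small) products. -/
def ClosedUnderProducts (S : Set T) : Prop :=
  ∀ ⦃ι : Type v⦄ (f : ι → T), (∀ i, f i ∈ S) → (∏ᶜ f) ∈ S

/-- Closed under all (small) coproducts. -/
def ClosedUnderCoproducts (S : Set T) : Prop :=
  ∀ ⦃ι : Type v⦄ (f : ι → T), (∀ i, f i ∈ S) → (∐ f) ∈ S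

/-- Semilocalizing: closed under coproducts, cofibres and extensions. -/
def IsSemilocalizing (S : Set T) : Prop :=
  ClosedUnderCoproducts S ∧ ClosedUnderCofibres S ∧ ClosedUnderExtensions S

/-- Semicolocalizing: closed under products, fibres and extensions. -/
def IsSemicolocalizing (S : Set T) : Prop :=
  ClosedUnderProducts S ∧ ClosedUnderFibres S ∧ ClosedUnderExtensions S

/-- Localizing: closed under coproducts, fibres, cofibres and extensions. -/
def IsLocalizing (S : Set T) : Prop :=
  ClosedUnderCoproducts S ∧ ClosedUnderFibres S ∧ ClosedUnderCofibres S ∧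
    ClosedUnderExtensions S

/-- Colocalizing: closed under products, fibres, cofibres and extensions. -/
def IsColocalizing (S : Set T) : Prop :=
  ClosedUnderProducts S ∧ ClosedUnderFibres S ∧ ClosedUnderCofibres S ∧
    ClosedUnderExtensions S

/-- The smallest semilocalizing subcategory containing `D`. -/
def semiloc (D : Set T) : Set T := ⋂₀ {S : Set T | IsSemilocalizing S ∧ D ⊆ S}

/-- The smallest semicolocalizing subcategory containing `D`. -/
def semicoloc (D : Set T) : Set T := ⋂₀ {S : Set T | IsSemicolocalizing S ∧ D ⊆ S}

/-- The smallest localizing subcategory containing `D`. -/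
def loc (D : Set T) : Set T := ⋂₀ {S : Set T | IsLocalizing S ∧ D ⊆ S}

/-- The smallest colocalizing subcategory containing `D`. -/
def coloc (D : Set T) : Set T := ⋂₀ {S : Set T | IsColocalizing S ∧ D ⊆ S}

end WithLimits

end Triangulated

/-!
If the local objects are closed under fibres and extensions, factor `v : Y ⟶ Z` through the unit
as `v' : LY ⟶ Z` and let `F ⟶ LY ⟶ Z ⟶ F⟦1⟧` be a fibre triangle of `v'`; `F` is local. The
morphism of triangles extending `(unit Y, 𝟙 Z)` gives `α : X ⟶ F`, and the long exact Hom-sequences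
show that every map from `X` to a local `W` factors uniquely through `α`. Injectivity is formal;
surjectivity needs `v' ≫ k = 0` for `k : Z ⟶ W⟦1⟧` with `v ≫ k = 0`, which holds because the fibre
of `k` is local. Hence `F ≅ LX`, and the fibre triangle is the image of the given one.

Conversely, the unit is a morphism from a triangle to its image, so if the unit is invertible on
two vertices it is on the third.
-/

section Triangulated

variable {T : Type u} [Category.{v} T] [HasZeroObject T] [Preadditive T] [HasShift T ℤ]
  [∀ n : ℤ, (shiftFunctor T n).Additive] [Pretriangulated T]

lemma Triangle.yoneda_exact₁ (D : Triangle T) (hD : D ∈ distTriang T) {W : T}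
    (f : D.obj₁ ⟶ W) (hf : D.mor₃ ≫ f⟦(1:ℤ)⟧' = 0) : ∃ h : D.obj₂ ⟶ W, f = D.mor₁ ≫ h := by
  obtain ⟨e, he⟩ : ∃ e : D.obj₂⟦(1:ℤ)⟧ ⟶ W⟦(1:ℤ)⟧, f⟦(1:ℤ)⟧' = (-D.mor₁⟦(1:ℤ)⟧') ≫ e :=
    Triangle.yoneda_exact₃ _ (rot_of_distTriang _ hD) (f⟦(1:ℤ)⟧') hf
  refine ⟨-(shiftFunctor T (1:ℤ)).preimage e, (shiftFunctor T (1:ℤ)).map_injective ?_⟩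
  simp [he]

end Triangulated

namespace ReflectionData

section Category

variable {T : Type u} [Category.{v} T] (R : ReflectionData T)

lemma obj_mem_localObjects (X : T) : R.L.obj X ∈ R.localObjects :=
  R.L.obj_mem_essImage X

lemma mem_localObjects_of_iso {A B : T} (e : A ≅ B) (hA : A ∈ R.localObjects) :
    B ∈ R.localObjects :=
  Functor.essImage.ofIso e hA

lemma mem_localObjects_of_isIso_unit_app {W : T} (h : IsIso (R.unit.app W)) :
    W ∈ R.localObjects :=
  R.mem_localObjects_of_iso (asIso (R.unit.app W)).symm (R.obj_mem_localObjects W)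

lemma unit_app_comp_map {X Y : T} (u : X ⟶ Y) :
    R.unit.app X ≫ R.L.map u = u ≫ R.unit.app Y :=
  (R.unit.naturality u).symm

variable {R}

namespace IsReflection

variable (hR : R.IsReflection)
include hR

lemma hom_ext {X W : T} (hW : W ∈ R.localObjects) {g₁ g₂ : R.L.obj X ⟶ W}
    (h : R.unit.app X ≫ g₁ = R.unit.app X ≫ g₂) : g₁ = g₂ :=
  (hR hW _).unique rfl h.symm

lemma isIso_unit_app {W : T} (hW : W ∈ R.localObjects) : IsIso (R.unit.app W) := by
  obtain ⟨r, hr, -⟩ := hR hW (𝟙 W)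
  refine ⟨r, hr, hR.hom_ext (R.obj_mem_localObjects W) ?_⟩
  rw [reassoc_of% hr, comp_id]

lemma isIso_of_existsUnique_factor {X F : T} (hF : F ∈ R.localObjects) (α : X ⟶ F)
    (hα : ∀ ⦃W : T⦄, W ∈ R.localObjects → ∀ f : X ⟶ W, ∃! g : F ⟶ W, α ≫ g = f)
    (θ : R.L.obj X ⟶ F) (hθ : R.unit.app X ≫ θ = α) : IsIso θ := by
  obtain ⟨θ', hθ', -⟩ := hα (R.obj_mem_localObjects X) (R.unit.app X)
  refine ⟨θ', hR.hom_ext (R.obj_mem_localObjects X) ?_, (hα hF α).unique ?_ (comp_id α)⟩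
  · rw [reassoc_of% hθ, hθ', comp_id]
  · rw [reassoc_of% hθ', hθ]

lemma closedUnderProducts [HasProducts.{v} T] : ClosedUnderProducts R.localObjects := by
  intro ι f hf
  choose g hg using fun i => (hR (hf i) (Pi.π f i)).exists
  have h₁ : R.unit.app (∏ᶜ f) ≫ Pi.lift g = 𝟙 _ := by
    ext i
    simp [hg i]
  refine R.mem_localObjects_of_isIso_unit_app
    ⟨Pi.lift g, h₁, hR.hom_ext (R.obj_mem_localObjects _) ?_⟩
  rw [reassoc_of% h₁, comp_id]

end IsReflection

end Category

section Triangulated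

variable {T : Type u} [Category.{v} T] [HasZeroObject T] [Preadditive T] [HasShift T ℤ]
  [∀ n : ℤ, (shiftFunctor T n).Additive] [Pretriangulated T]

variable (R : ReflectionData T)

def PreservesDistTriangWithLocalObj₃ : Prop :=
  ∀ ⦃X Y Z : T⦄ (u : X ⟶ Y) (v : Y ⟶ Z) (w : Z ⟶ X⟦(1:ℤ)⟧),
    (Triangle.mk u v w ∈ distTriang T) → Z ∈ R.localObjects →
    ∃ w' : R.L.obj Z ⟶ (R.L.obj X)⟦(1:ℤ)⟧,
      R.unit.app Z ≫ w' = w ≫ (R.unit.app X)⟦(1:ℤ)⟧' ∧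
      Triangle.mk (R.L.map u) (R.L.map v) w' ∈ distTriang T

def unitTriangleHom {X Y Z : T} (u : X ⟶ Y) (v : Y ⟶ Z) (w : Z ⟶ X⟦(1:ℤ)⟧)
    (w' : R.L.obj Z ⟶ (R.L.obj X)⟦(1:ℤ)⟧) (hw' : R.unit.app Z ≫ w' = w ≫ (R.unit.app X)⟦(1:ℤ)⟧') :
    Triangle.mk u v w ⟶ Triangle.mk (R.L.map u) (R.L.map v) w' :=
  Triangle.homMk _ _ (R.unit.app X) (R.unit.app Y) (R.unit.app Z)
    (R.unit_app_comp_map u).symm (R.unit_app_comp_map v).symm hw'.symm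

variable {R}

namespace IsReflection

variable (hR : R.IsReflection)
include hR

/-- The fibre of `k` is local, being an extension of `Z` by `W`, so `R.unit.app Y ≫ g` factors
through it. -/
lemma comp_eq_zero_of_unit_app_comp (hext : ClosedUnderExtensions R.localObjects) {Y Z W : T}
    (hZ : Z ∈ R.localObjects) (hW : W ∈ R.localObjects) (g : R.L.obj Y ⟶ Z)
    (k : Z ⟶ W⟦(1:ℤ)⟧) (h : R.unit.app Y ≫ g ≫ k = 0) : g ≫ k = 0 := by
  obtain ⟨V, j, ζ, hV⟩ := distinguished_cocone_triangle₁ k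
  have hV' : V ∈ R.localObjects := hext _ _ _ (inv_rot_of_distTriang _ hV)
    (R.mem_localObjects_of_iso ((shiftEquiv T (1:ℤ)).unitIso.app W) hW) hZ
  obtain ⟨a, ha⟩ : ∃ a : Y ⟶ V, R.unit.app Y ≫ g = a ≫ j :=
    Triangle.coyoneda_exact₂ _ hV _ ((assoc _ _ _).trans h)
  obtain ⟨b, hb, -⟩ := hR hV' a
  have hg : g = b ≫ j := hR.hom_ext hZ (by rw [reassoc_of% hb]; exact ha)
  have hjk : j ≫ k = 0 := comp_distTriang_mor_zero₁₂ _ hV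
  rw [hg, assoc, hjk, comp_zero]

section Comparison

variable {X Y Z F W : T} {u : X ⟶ Y} {v : Y ⟶ Z} {w : Z ⟶ X⟦(1:ℤ)⟧}
  {v' : R.L.obj Y ⟶ Z} {f₀ : F ⟶ R.L.obj Y} {δ : Z ⟶ F⟦(1:ℤ)⟧} {α : X ⟶ F}
  (hT : Triangle.mk u v w ∈ distTriang T) (hB : Triangle.mk f₀ v' δ ∈ distTriang T)
  (hv' : R.unit.app Y ≫ v' = v) (hα₁ : u ≫ R.unit.app Y = α ≫ f₀) (hα₃ : w ≫ α⟦(1:ℤ)⟧' = δ)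
include hT hB hv' hα₁ hα₃

lemma eq_zero_of_comp_eq_zero (hW : W ∈ R.localObjects) (g : F ⟶ W) (hg : α ≫ g = 0) :
    g = 0 := by
  obtain ⟨h, rfl⟩ : ∃ h : R.L.obj Y ⟶ W, g = f₀ ≫ h := Triangle.yoneda_exact₁ _ hB g (by
    change δ ≫ g⟦(1:ℤ)⟧' = 0
    rw [← hα₃, assoc, ← Functor.map_comp, hg, Functor.map_zero, comp_zero])
  obtain ⟨h₂, hh₂⟩ : ∃ h₂ : Z ⟶ W, R.unit.app Y ≫ h = v ≫ h₂ :=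
    Triangle.yoneda_exact₂ _ hT _ ((reassoc_of% hα₁) h |>.trans hg)
  have hh : h = v' ≫ h₂ := hR.hom_ext hW (by rw [reassoc_of% hv']; exact hh₂)
  have hf₀v' : f₀ ≫ v' = 0 := comp_distTriang_mor_zero₁₂ _ hB
  rw [hh, reassoc_of% hf₀v', zero_comp]

lemma exists_comp_eq (hext : ClosedUnderExtensions R.localObjects) (hZ : Z ∈ R.localObjects)
    (hW : W ∈ R.localObjects) (f : X ⟶ W) : ∃ g : F ⟶ W, α ≫ g = f := by
  have hvw : v ≫ w = 0 := comp_distTriang_mor_zero₂₃ _ hT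
  have hv'wf : v' ≫ w ≫ f⟦(1:ℤ)⟧' = 0 := hR.comp_eq_zero_of_unit_app_comp hext hZ hW v'
    (w ≫ f⟦(1:ℤ)⟧') (by rw [reassoc_of% hv', reassoc_of% hvw, zero_comp])
  obtain ⟨g', hg'⟩ : ∃ g' : F⟦(1:ℤ)⟧ ⟶ W⟦(1:ℤ)⟧, w ≫ f⟦(1:ℤ)⟧' = δ ≫ g' :=
    Triangle.yoneda_exact₃ _ hB _ hv'wf
  obtain ⟨g₁, rfl⟩ := (shiftFunctor T (1:ℤ)).map_surjective g'
  obtain ⟨h, hh⟩ : ∃ h : Y ⟶ W, f - α ≫ g₁ = u ≫ h := Triangle.yoneda_exact₁ _ hT _ (by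
    change w ≫ (f - α ≫ g₁)⟦(1:ℤ)⟧' = 0
    rw [Functor.map_sub, Preadditive.comp_sub, hg', Functor.map_comp, ← reassoc_of% hα₃,
      sub_self])
  obtain ⟨h', hh', -⟩ := hR hW h
  refine ⟨g₁ + f₀ ≫ h', ?_⟩
  rw [Preadditive.comp_add, ← reassoc_of% hα₁, hh', ← hh]
  abel

lemma existsUnique_comp_eq (hext : ClosedUnderExtensions R.localObjects)
    (hZ : Z ∈ R.localObjects) (hW : W ∈ R.localObjects) (f : X ⟶ W) :
    ∃! g : F ⟶ W, α ≫ g = f := by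
  obtain ⟨g, hg⟩ := hR.exists_comp_eq hT hB hv' hα₁ hα₃ hext hZ hW f
  refine ⟨g, hg, fun g' hg' => sub_eq_zero.mp ?_⟩
  exact hR.eq_zero_of_comp_eq_zero hT hB hv' hα₁ hα₃ hW _
    (by rw [Preadditive.comp_sub, hg, hg', sub_self])

end Comparison

lemma preservesDistTriangWithLocalObj₃ (hfib : ClosedUnderFibres R.localObjects)
    (hext : ClosedUnderExtensions R.localObjects) : R.PreservesDistTriangWithLocalObj₃ := by
  intro X Y Z u v w hT hZ
  obtain ⟨v', hv', -⟩ := hR hZ v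
  obtain ⟨F, f₀, δ, hB⟩ := distinguished_cocone_triangle₁ v'
  have hF : F ∈ R.localObjects := hfib f₀ v' δ hB (R.obj_mem_localObjects Y) hZ
  obtain ⟨α, hα₁, hα₃⟩ : ∃ α : X ⟶ F, u ≫ R.unit.app Y = α ≫ f₀ ∧ w ≫ α⟦(1:ℤ)⟧' = 𝟙 Z ≫ δ :=
    complete_distinguished_triangle_morphism₁ _ _ hT hB (R.unit.app Y) (𝟙 Z)
      ((comp_id v).trans hv'.symm)
  rw [id_comp] at hα₃
  obtain ⟨θ, hθ, -⟩ := hR hF α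
  have hθiso : IsIso θ := hR.isIso_of_existsUnique_factor hF α
    (fun _ hW f => hR.existsUnique_comp_eq hT hB hv' hα₁ hα₃ hext hZ hW f) θ hθ
  have hηZ : IsIso (R.unit.app Z) := hR.isIso_unit_app hZ
  have hLu : R.L.map u = θ ≫ f₀ := hR.hom_ext (R.obj_mem_localObjects Y) (by
    rw [unit_app_comp_map, hα₁, reassoc_of% hθ])
  have hLv : R.L.map v = v' ≫ R.unit.app Z := hR.hom_ext (R.obj_mem_localObjects Z) (by
    rw [unit_app_comp_map, reassoc_of% hv'])
  refine ⟨inv (R.unit.app Z) ≫ δ ≫ inv (θ⟦(1:ℤ)⟧'), ?_, isomorphic_distinguished _ hB _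
    (Triangle.isoMk _ _ (asIso θ : R.L.obj X ≅ F) (Iso.refl _) (asIso (R.unit.app Z)).symm
      ?_ ?_ ?_)⟩
  · rw [IsIso.hom_inv_id_assoc, ← hα₃, ← hθ]
    simp
  · exact (comp_id _).trans hLu
  · change R.L.map v ≫ inv (R.unit.app Z) = 𝟙 (R.L.obj Y) ≫ v'
    rw [hLv, assoc, IsIso.hom_inv_id, comp_id, id_comp]
  · change (inv (R.unit.app Z) ≫ δ ≫ inv (θ⟦(1:ℤ)⟧')) ≫ θ⟦(1:ℤ)⟧' = inv (R.unit.app Z) ≫ δ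
    rw [assoc, assoc, IsIso.inv_hom_id, comp_id]

lemma closedUnderFibres (hP : R.PreservesDistTriangWithLocalObj₃) :
    ClosedUnderFibres R.localObjects := by
  intro X Y Z u v w hT hY hZ
  obtain ⟨w', hw', hT'⟩ := hP u v w hT hZ
  exact R.mem_localObjects_of_isIso_unit_app (isIso₁_of_isIso₂₃ (R.unitTriangleHom u v w w' hw')
    hT hT' (hR.isIso_unit_app hY) (hR.isIso_unit_app hZ))

lemma closedUnderExtensions (hP : R.PreservesDistTriangWithLocalObj₃) :
    ClosedUnderExtensions R.localObjects := by
  intro X Y Z u v w hT hX hZ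
  obtain ⟨w', hw', hT'⟩ := hP u v w hT hZ
  exact R.mem_localObjects_of_isIso_unit_app (isIso₂_of_isIso₁₃ (R.unitTriangleHom u v w w' hw')
    hT hT' (hR.isIso_unit_app hX) (hR.isIso_unit_app hZ))

end IsReflection

end Triangulated

end ReflectionData

section Statements

variable {T : Type u} [Category.{v} T] [HasZeroObject T] [Preadditive T] [HasShift T ℤ]
  [∀ n : ℤ, (shiftFunctor T n).Additive] [Pretriangulated T]
  [HasProducts.{v} T] [HasCoproducts.{v} T]

/-- A reflection `L` on a triangulated category is semiexact if and only if `L`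
preserves every distinguished triangle `X → Y → Z → ΣX` in which `Z` is `L`-local: applying `L`
and the unit yields a distinguished triangle `LX → LY → LZ → ΣLX`. -/
theorem statement2 (R : ReflectionData T) (hrefl : R.IsReflection) :
    IsSemicolocalizing R.localObjects ↔
      ∀ ⦃X Y Z : T⦄ (u : X ⟶ Y) (v : Y ⟶ Z) (w : Z ⟶ X⟦(1:ℤ)⟧),
        (Triangle.mk u v w ∈ distTriang T) → Z ∈ R.localObjects →
        ∃ w' : R.L.obj Z ⟶ (R.L.obj X)⟦(1:ℤ)⟧,
          R.unit.app Z ≫ w' = w ≫ (R.unit.app X)⟦(1:ℤ)⟧' ∧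
          Triangle.mk (R.L.map u) (R.L.map v) w' ∈ distTriang T := by
  constructor
  · rintro ⟨-, hfib, hext⟩
    exact hrefl.preservesDistTriangWithLocalObj₃ hfib hext
  · intro hP
    exact ⟨hrefl.closedUnderProducts, hrefl.closedUnderFibres hP, hrefl.closedUnderExtensions hP⟩

end Statements

end Paper
end

section
/- Let D be any class of objects in a triangulated category T with products and coproducts. If semicoloc(D) is reflective (the inclusion has a left adjoint), then semicoloc(D) = (⊾D)⊿; and if semiloc(D) is coreflective (the inclusion has a right adjoint), then semiloc(D) = ⊾(D⊿). -/
/-!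
Let `S = semicoloc D` be reflective, with reflection `l : X ⟶ W`, and let
`Γ ⟶ X ⟶ W ⟶ Γ⟦1⟧` (last map `δ`) be a triangle on `l`. Every map `g : Γ ⟶ V` with `V ∈ S`
vanishes: in a triangle `V ⟶ F ⟶ W ⟶ V⟦1⟧` on `δ ≫ g⟦1⟧` the extension `F` lies in `S`, so
the comparison map `X ⟶ F` factors through `l`, which splits `F ⟶ W`; hence `V ⟶ F` is a split
mono killed by `g`. Since `S` is closed under desuspension, `Γ ∈ ⊾S ⊆ ⊾D`. For `X ∈ (⊾D)⊿` the
map `Γ ⟶ X` therefore vanishes, `l` is a split mono, and the universal property makes it an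
isomorphism, so `X ∈ S`. Conversely `(⊾D)⊿` is semicolocalizing and contains `D`. The
coreflective case is dual.
-/

open CategoryTheory Category Limits Pretriangulated

universe v u

namespace Paper

section Reflections

variable {T : Type u} [Category.{v} T] {S : Set T}

def IsReflectionArrow (S : Set T) {X W : T} (l : X ⟶ W) : Prop :=
  W ∈ S ∧ ∀ ⦃V : T⦄, V ∈ S → ∀ f : X ⟶ V, ∃! g : W ⟶ V, l ≫ g = f

def IsCoreflectionArrow (S : Set T) {W X : T} (c : W ⟶ X) : Prop :=
  W ∈ S ∧ ∀ ⦃V : T⦄, V ∈ S → ∀ f : V ⟶ X, ∃! g : V ⟶ W, g ≫ c = f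

lemma ReflectiveSet.exists_isReflectionArrow (h : ReflectiveSet S) (X : T) :
    ∃ (W : T) (l : X ⟶ W), IsReflectionArrow S l := by
  have : (ObjectProperty.ι (· ∈ S)).IsRightAdjoint := h
  let adj := Adjunction.ofIsRightAdjoint (ObjectProperty.ι (· ∈ S))
  refine ⟨_, adj.unit.app X, ((ObjectProperty.ι (· ∈ S)).leftAdjoint.obj X).property,
    fun V hV f => ?_⟩
  let e := adj.homEquiv X ⟨V, hV⟩
  refine ⟨(e.symm f).hom, ?_, fun g hg => ?_⟩
  · have := e.apply_symm_apply f
    rwa [Adjunction.homEquiv_unit] at this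
  · have : e (ObjectProperty.homMk g) = f := by rw [Adjunction.homEquiv_unit]; exact hg
    rw [← this, e.symm_apply_apply]
    rfl

lemma CoreflectiveSet.exists_isCoreflectionArrow (h : CoreflectiveSet S) (X : T) :
    ∃ (W : T) (c : W ⟶ X), IsCoreflectionArrow S c := by
  have : (ObjectProperty.ι (· ∈ S)).IsLeftAdjoint := h
  let adj := Adjunction.ofIsLeftAdjoint (ObjectProperty.ι (· ∈ S))
  refine ⟨_, adj.counit.app X, ((ObjectProperty.ι (· ∈ S)).rightAdjoint.obj X).property,
    fun V hV f => ?_⟩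
  let e := adj.homEquiv ⟨V, hV⟩ X
  refine ⟨(e f).hom, ?_, fun g hg => ?_⟩
  · have := e.symm_apply_apply f
    rwa [Adjunction.homEquiv_counit] at this
  · have : e.symm (ObjectProperty.homMk g) = f := by rw [Adjunction.homEquiv_counit]; exact hg
    rw [← this, e.apply_symm_apply]
    rfl

lemma IsReflectionArrow.hom_ext {X W V : T} {l : X ⟶ W} (hl : IsReflectionArrow S l)
    (hV : V ∈ S) {g₁ g₂ : W ⟶ V} (h : l ≫ g₁ = l ≫ g₂) : g₁ = g₂ :=
  (hl.2 hV (l ≫ g₂)).unique h rfl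

lemma IsCoreflectionArrow.hom_ext {W X V : T} {c : W ⟶ X} (hc : IsCoreflectionArrow S c)
    (hV : V ∈ S) {g₁ g₂ : V ⟶ W} (h : g₁ ≫ c = g₂ ≫ c) : g₁ = g₂ :=
  (hc.2 hV (g₂ ≫ c)).unique h rfl

end Reflections

section Orthogonal

variable {T : Type u} [Category.{v} T] [Preadditive T] [HasShift T ℤ]

lemma eq_zero_of_mem_rightSemiOrth {E : Set T} {A Y : T} (hY : Y ∈ rightSemiOrth E) (hA : A ∈ E)
    (f : A ⟶ Y) : f = 0 := by
  rw [← cancel_epi ((shiftFunctorZero T ℤ).hom.app A), comp_zero]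
  exact hY hA 0 le_rfl _

lemma eq_zero_of_mem_leftSemiOrth {E : Set T} {A X : T} (hX : X ∈ leftSemiOrth E) (hA : A ∈ E)
    (f : X ⟶ A) : f = 0 := by
  rw [← cancel_mono ((shiftFunctorZero T ℤ).inv.app A), zero_comp]
  exact hX hA 0 le_rfl _

lemma leftSemiOrth_anti {D E : Set T} (h : D ⊆ E) : leftSemiOrth E ⊆ leftSemiOrth D :=
  fun _ hX _ hA => hX (h hA)

lemma rightSemiOrth_anti {D E : Set T} (h : D ⊆ E) : rightSemiOrth E ⊆ rightSemiOrth D :=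
  fun _ hY _ hA => hY (h hA)

end Orthogonal

section Shift

variable {T : Type u} [Category.{v} T] [Preadditive T] [HasShift T ℤ]
  [∀ n : ℤ, (shiftFunctor T n).Additive]

lemma eq_zero_of_forall_hom_to_shift_eq_zero {a b : ℤ} (hab : a + b = 0) {A B : T}
    (H : ∀ g : A ⟶ B⟦b⟧, g = 0) (f : A⟦a⟧ ⟶ B) : f = 0 := by
  rw [← Functor.map_eq_zero_iff (shiftFunctor T b),
    ← cancel_epi ((shiftFunctorCompIsoId T a b hab).inv.app A), comp_zero]
  exact H _

lemma eq_zero_of_forall_hom_from_shift_eq_zero {a b : ℤ} (hab : a + b = 0) {A B : T}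
    (H : ∀ g : A⟦a⟧ ⟶ B, g = 0) (f : A ⟶ B⟦b⟧) : f = 0 := by
  rw [← Functor.map_eq_zero_iff (shiftFunctor T a),
    ← cancel_mono ((shiftFunctorCompIsoId T b a (by omega)).hom.app B), zero_comp]
  exact H _

lemma subset_rightSemiOrth_leftSemiOrth (D : Set T) : D ⊆ rightSemiOrth (leftSemiOrth D) :=
  fun _ hE _ hA k _ f =>
    eq_zero_of_forall_hom_to_shift_eq_zero (add_neg_cancel k) (hA hE (-k) (by omega)) f

lemma subset_leftSemiOrth_rightSemiOrth (D : Set T) : D ⊆ leftSemiOrth (rightSemiOrth D) :=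
  fun _ hE _ hA k _ f =>
    eq_zero_of_forall_hom_from_shift_eq_zero (neg_add_cancel k) (hA hE (-k) (by omega)) f

end Shift

section Closure

open ZeroObject

variable {T : Type u} [Category.{v} T] [HasZeroObject T] [Preadditive T] [HasShift T ℤ]
  [∀ n : ℤ, (shiftFunctor T n).Additive] [Pretriangulated T] {S : Set T}

lemma ClosedUnderExtensions.mem_of_iso (hext : ClosedUnderExtensions S) {P : T} (hP : P ∈ S)
    (hPz : IsZero P) {X Y : T} (e : X ≅ Y) (hY : Y ∈ S) : X ∈ S := by
  refine hext e.inv (0 : X ⟶ P) 0 (isomorphic_distinguished _ (contractible_distinguished Y) _ ?_)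
    hY hP
  exact Triangle.isoMk _ _ (Iso.refl Y) e hPz.isoZero (e.inv_hom_id.trans (comp_id _).symm)
    (zero_comp.trans comp_zero.symm) (zero_comp.trans comp_zero.symm)

end Closure

section Products

open ZeroObject

variable {T : Type u} [Category.{v} T] [HasZeroObject T] [Preadditive T] [HasShift T ℤ]
  [∀ n : ℤ, (shiftFunctor T n).Additive] [Pretriangulated T] [HasProducts.{v} T] {S : Set T}

lemma ClosedUnderProducts.exists_isZero_mem (h : ClosedUnderProducts S) :
    ∃ P : T, P ∈ S ∧ IsZero P :=
  ⟨∏ᶜ (PEmpty.elim : PEmpty.{v + 1} → T), h _ (fun i => i.elim),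
    (IsZero.iff_id_eq_zero _).2 (Pi.hom_ext _ _ (fun i => i.elim))⟩

lemma IsSemicolocalizing.mem_of_iso (hS : IsSemicolocalizing S) {X Y : T} (e : X ≅ Y)
    (hY : Y ∈ S) : X ∈ S :=
  have ⟨_, hP, hPz⟩ := hS.1.exists_isZero_mem
  hS.2.2.mem_of_iso hP hPz e hY

lemma IsSemicolocalizing.shift_neg_one_mem (hS : IsSemicolocalizing S) {Y : T} (hY : Y ∈ S) :
    Y⟦(-1 : ℤ)⟧ ∈ S :=
  have ⟨_, hP, hPz⟩ := hS.1.exists_isZero_mem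
  hS.2.1 _ _ _ (contractible_distinguished₂ (Y⟦(-1 : ℤ)⟧)) (hS.mem_of_iso hPz.isoZero.symm hP)
    (hS.mem_of_iso ((shiftFunctorCompIsoId T (-1) 1 (by omega)).app Y) hY)

lemma IsSemicolocalizing.shift_mem (hS : IsSemicolocalizing S) {Y : T} (hY : Y ∈ S) {k : ℤ}
    (hk : k ≤ 0) : Y⟦k⟧ ∈ S := by
  induction k, hk using Int.leInductionDown with
  | base => exact hS.mem_of_iso ((shiftFunctorZero T ℤ).app Y) hY
  | pred n _ ih =>
    exact hS.mem_of_iso ((shiftFunctorAdd' T n (-1) (n - 1) (by omega)).app Y)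
      (hS.shift_neg_one_mem ih)

lemma rightSemiOrth_isSemicolocalizing (E : Set T) : IsSemicolocalizing (rightSemiOrth E) := by
  refine ⟨fun _ Y hY A hA k hk f => Pi.hom_ext _ _ fun i => ?_, ?_, ?_⟩
  · rw [zero_comp]
    exact hY i hA k hk _
  · intro X Y Z u _ _ hT hY hZ A hA k hk f
    have hfu : f⟦(1 : ℤ)⟧' ≫ u⟦(1 : ℤ)⟧' = 0 := by
      rw [← Functor.map_comp, hY hA k hk (f ≫ u), Functor.map_zero]
    obtain ⟨g, hg⟩ := Triangle.coyoneda_exact₁ _ hT _ hfu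
    have e := (shiftFunctorAdd' T k 1 (k + 1) rfl).app A
    have hg₀ : g = 0 := by
      rw [← cancel_epi e.hom, comp_zero]
      exact hZ hA (k + 1) (by omega) _
    refine (Functor.map_eq_zero_iff (shiftFunctor T (1 : ℤ))).1 (hg.trans ?_)
    rw [hg₀]
    exact zero_comp
  · intro X Y Z _ _ _ hT hX hZ A hA k hk f
    obtain ⟨g, rfl⟩ := Triangle.coyoneda_exact₂ _ hT f (hZ hA k hk _)
    rw [hX hA k hk g]
    exact zero_comp

lemma semicoloc_isSemicolocalizing (D : Set T) : IsSemicolocalizing (semicoloc D) :=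
  ⟨fun _ f hf => Set.mem_sInter.2 fun S hS => hS.1.1 f fun i => Set.mem_sInter.1 (hf i) S hS,
    fun _ _ _ u v w hT hY hZ => Set.mem_sInter.2 fun S hS =>
      hS.1.2.1 u v w hT (Set.mem_sInter.1 hY S hS) (Set.mem_sInter.1 hZ S hS),
    fun _ _ _ u v w hT hX hZ => Set.mem_sInter.2 fun S hS =>
      hS.1.2.2 u v w hT (Set.mem_sInter.1 hX S hS) (Set.mem_sInter.1 hZ S hS)⟩

lemma subset_semicoloc (D : Set T) : D ⊆ semicoloc D :=
  Set.subset_sInter fun _ hS => hS.2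

lemma semicoloc_subset {D : Set T} (hS : IsSemicolocalizing S) (hD : D ⊆ S) :
    semicoloc D ⊆ S :=
  Set.sInter_subset_of_mem ⟨hS, hD⟩

end Products

section Coproducts

open ZeroObject

variable {T : Type u} [Category.{v} T] [HasZeroObject T] [Preadditive T] [HasShift T ℤ]
  [∀ n : ℤ, (shiftFunctor T n).Additive] [Pretriangulated T] [HasCoproducts.{v} T] {S : Set T}

lemma ClosedUnderCoproducts.exists_isZero_mem (h : ClosedUnderCoproducts S) :
    ∃ P : T, P ∈ S ∧ IsZero P :=
  ⟨∐ (PEmpty.elim : PEmpty.{v + 1} → T), h _ (fun i => i.elim),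
    (IsZero.iff_id_eq_zero _).2 (Sigma.hom_ext _ _ (fun i => i.elim))⟩

lemma IsSemilocalizing.mem_of_iso (hS : IsSemilocalizing S) {X Y : T} (e : X ≅ Y)
    (hY : Y ∈ S) : X ∈ S :=
  have ⟨_, hP, hPz⟩ := hS.1.exists_isZero_mem
  hS.2.2.mem_of_iso hP hPz e hY

lemma IsSemilocalizing.shift_one_mem (hS : IsSemilocalizing S) {Y : T} (hY : Y ∈ S) :
    Y⟦(1 : ℤ)⟧ ∈ S :=
  have ⟨_, hP, hPz⟩ := hS.1.exists_isZero_mem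
  hS.2.1 _ _ _ (contractible_distinguished₂ Y) hY (hS.mem_of_iso hPz.isoZero.symm hP)

lemma IsSemilocalizing.shift_mem (hS : IsSemilocalizing S) {Y : T} (hY : Y ∈ S) {k : ℤ}
    (hk : 0 ≤ k) : Y⟦k⟧ ∈ S := by
  induction k, hk using Int.leInduction with
  | base => exact hS.mem_of_iso ((shiftFunctorZero T ℤ).app Y) hY
  | succ n _ ih =>
    exact hS.mem_of_iso ((shiftFunctorAdd' T n 1 (n + 1) rfl).app Y) (hS.shift_one_mem ih)

lemma leftSemiOrth_isSemilocalizing (E : Set T) : IsSemilocalizing (leftSemiOrth E) := by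
  refine ⟨fun _ X hX A hA k hk f => Sigma.hom_ext _ _ fun i => ?_, ?_, ?_⟩
  · rw [comp_zero]
    exact hX i hA k hk _
  · intro X Y Z _ _ _ hT hX hY A hA k hk f
    obtain ⟨g, rfl⟩ := Triangle.yoneda_exact₃ _ hT f (hY hA k hk _)
    have e := (shiftFunctorAdd' T k (-1) (k - 1) (by omega)).app A
    have hg : g = 0 := eq_zero_of_forall_hom_to_shift_eq_zero (add_neg_cancel 1) (fun h => by
      rw [← cancel_mono e.inv, zero_comp]
      exact hX hA (k - 1) (by omega) _) g
    rw [hg]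
    exact comp_zero
  · intro X Y Z _ _ _ hT hX hZ A hA k hk f
    obtain ⟨g, rfl⟩ := Triangle.yoneda_exact₂ _ hT f (hX hA k hk _)
    rw [hZ hA k hk g]
    exact comp_zero

lemma semiloc_isSemilocalizing (D : Set T) : IsSemilocalizing (semiloc D) :=
  ⟨fun _ f hf => Set.mem_sInter.2 fun S hS => hS.1.1 f fun i => Set.mem_sInter.1 (hf i) S hS,
    fun _ _ _ u v w hT hX hY => Set.mem_sInter.2 fun S hS =>
      hS.1.2.1 u v w hT (Set.mem_sInter.1 hX S hS) (Set.mem_sInter.1 hY S hS),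
    fun _ _ _ u v w hT hX hZ => Set.mem_sInter.2 fun S hS =>
      hS.1.2.2 u v w hT (Set.mem_sInter.1 hX S hS) (Set.mem_sInter.1 hZ S hS)⟩

lemma subset_semiloc (D : Set T) : D ⊆ semiloc D :=
  Set.subset_sInter fun _ hS => hS.2

lemma semiloc_subset {D : Set T} (hS : IsSemilocalizing S) (hD : D ⊆ S) :
    semiloc D ⊆ S :=
  Set.sInter_subset_of_mem ⟨hS, hD⟩

end Coproducts

section Reflective

variable {T : Type u} [Category.{v} T] [HasZeroObject T] [Preadditive T] [HasShift T ℤ]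
  [∀ n : ℤ, (shiftFunctor T n).Additive] [Pretriangulated T] {S : Set T}

lemma IsReflectionArrow.hom_eq_zero_of_distTriang (hext : ClosedUnderExtensions S)
    {Γ X W V : T} {w : Γ ⟶ X} {l : X ⟶ W} {δ : W ⟶ Γ⟦(1 : ℤ)⟧} (hl : IsReflectionArrow S l)
    (hT : Triangle.mk w l δ ∈ distTriang T) (hV : V ∈ S) (g : Γ ⟶ V) : g = 0 := by
  obtain ⟨F, i, p, hT'⟩ := distinguished_cocone_triangle₂ (δ ≫ g⟦(1 : ℤ)⟧')
  obtain ⟨φ, hwφ, hlφ⟩ : ∃ φ : X ⟶ F, w ≫ φ = g ≫ i ∧ l ≫ 𝟙 W = φ ≫ p :=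
    complete_distinguished_triangle_morphism₂ _ _ hT hT' g (𝟙 W) (id_comp _).symm
  obtain ⟨φ', hφ', -⟩ := hl.2 (hext _ _ _ hT' hV hl.1) φ
  have hsplit : φ' ≫ p = 𝟙 W := hl.hom_ext hl.1 (by rw [← assoc, hφ']; exact hlφ.symm)
  have : IsSplitEpi p := ⟨⟨φ', hsplit⟩⟩
  have : Mono i :=
    Triangle.mono₁ _ hT' (Triangle.mor₃_eq_zero_of_epi₂ _ hT' (show Epi p from inferInstance))
  have hwl : w ≫ l = 0 := comp_distTriang_mor_zero₁₂ _ hT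
  rw [← cancel_mono i, zero_comp, ← hwφ, ← hφ', ← assoc, hwl]
  exact zero_comp

lemma IsCoreflectionArrow.hom_eq_zero_of_distTriang (hext : ClosedUnderExtensions S)
    {W X Q V : T} {c : W ⟶ X} {p : X ⟶ Q} {θ : Q ⟶ W⟦(1 : ℤ)⟧} (hc : IsCoreflectionArrow S c)
    (hT : Triangle.mk c p θ ∈ distTriang T) (hV : V ∈ S) (g : V ⟶ Q) : g = 0 := by
  obtain ⟨E, j, b, hT'⟩ := distinguished_cocone_triangle₂ (g ≫ θ)
  obtain ⟨φ, hjφ, hbφ⟩ : ∃ φ : E ⟶ X, j ≫ φ = 𝟙 W ≫ c ∧ b ≫ g = φ ≫ p :=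
    complete_distinguished_triangle_morphism₂ _ _ hT' hT (𝟙 W) g
      (show (g ≫ θ) ≫ (𝟙 W)⟦(1 : ℤ)⟧' = g ≫ θ by rw [CategoryTheory.Functor.map_id, comp_id])
  obtain ⟨φ', hφ', -⟩ := hc.2 (hext _ _ _ hT' hc.1 hV) φ
  have hsplit : j ≫ φ' = 𝟙 W := hc.hom_ext hc.1 (by rw [assoc, hφ']; exact hjφ)
  have : IsSplitMono j := ⟨⟨φ', hsplit⟩⟩
  have : Epi b :=
    Triangle.epi₂ _ hT' (Triangle.mor₃_eq_zero_of_mono₁ _ hT' (show Mono j from inferInstance))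
  have hcp : c ≫ p = 0 := comp_distTriang_mor_zero₁₂ _ hT
  rw [← cancel_epi b, comp_zero, hbφ, ← hφ', assoc, hcp]
  exact comp_zero

lemma rightSemiOrth_leftSemiOrth_subset [HasProducts.{v} T] (hS : IsSemicolocalizing S)
    (hS' : ReflectiveSet S) : rightSemiOrth (leftSemiOrth S) ⊆ S := by
  intro X hX
  obtain ⟨W, l, hl⟩ := hS'.exists_isReflectionArrow X
  obtain ⟨Γ, w, δ, hT⟩ := distinguished_cocone_triangle₁ l
  have hΓ : Γ ∈ leftSemiOrth S := fun _ hE _ hk f =>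
    hl.hom_eq_zero_of_distTriang hS.2.2 hT (hS.shift_mem hE hk) f
  obtain ⟨r, hlr⟩ : ∃ r : W ⟶ X, 𝟙 X = l ≫ r := Triangle.yoneda_exact₂ _ hT (𝟙 X)
    (by rw [eq_zero_of_mem_rightSemiOrth hX hΓ w]; exact zero_comp)
  have hrl : r ≫ l = 𝟙 W := hl.hom_ext hl.1 (by rw [← assoc, ← hlr, id_comp, comp_id])
  exact hS.mem_of_iso ⟨l, r, hlr.symm, hrl⟩ hl.1

lemma leftSemiOrth_rightSemiOrth_subset [HasCoproducts.{v} T] (hS : IsSemilocalizing S)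
    (hS' : CoreflectiveSet S) : leftSemiOrth (rightSemiOrth S) ⊆ S := by
  intro X hX
  obtain ⟨W, c, hc⟩ := hS'.exists_isCoreflectionArrow X
  obtain ⟨Q, p, θ, hT⟩ := distinguished_cocone_triangle c
  have hQ : Q ∈ rightSemiOrth S := fun _ hE _ hk f =>
    hc.hom_eq_zero_of_distTriang hS.2.2 hT (hS.shift_mem hE hk) f
  obtain ⟨r, hrc⟩ : ∃ r : X ⟶ W, 𝟙 X = r ≫ c := Triangle.coyoneda_exact₂ _ hT (𝟙 X)
    (by rw [eq_zero_of_mem_leftSemiOrth hX hQ p]; exact comp_zero)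
  have hcr : c ≫ r = 𝟙 W := hc.hom_ext hc.1 (by rw [assoc, ← hrc, comp_id, id_comp])
  exact hS.mem_of_iso ⟨r, c, hrc.symm, hcr⟩ hc.1

end Reflective

section Statements

variable {T : Type u} [Category.{v} T] [HasZeroObject T] [Preadditive T] [HasShift T ℤ]
  [∀ n : ℤ, (shiftFunctor T n).Additive] [Pretriangulated T]
  [HasProducts.{v} T] [HasCoproducts.{v} T]

/-- If `semicoloc(D)` is reflective then `semicoloc(D) = (⊾D)⊿`, and if
`semiloc(D)` is coreflective then `semiloc(D) = ⊾(D⊿)`. -/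
theorem statement8 (D : Set T) :
    (ReflectiveSet (semicoloc D) → semicoloc D = rightSemiOrth (leftSemiOrth D)) ∧
    (CoreflectiveSet (semiloc D) → semiloc D = leftSemiOrth (rightSemiOrth D)) := by
  refine ⟨fun hrefl => ?_, fun hcorefl => ?_⟩
  · refine (semicoloc_subset (rightSemiOrth_isSemicolocalizing _)
      (subset_rightSemiOrth_leftSemiOrth D)).antisymm ?_
    exact (rightSemiOrth_anti (leftSemiOrth_anti (subset_semicoloc D))).trans
      (rightSemiOrth_leftSemiOrth_subset (semicoloc_isSemicolocalizing D) hrefl)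
  · refine (semiloc_subset (leftSemiOrth_isSemilocalizing _)
      (subset_leftSemiOrth_rightSemiOrth D)).antisymm ?_
    exact (leftSemiOrth_anti (rightSemiOrth_anti (subset_semiloc D))).trans
      (leftSemiOrth_rightSemiOrth_subset (semiloc_isSemilocalizing D) hcorefl)

end Statements

end Paper
end
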